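/- arXiv:2201.01894 — 2 statements merged into one kernel-verified Lean document; each statement's English description precedes it below -/
import Mathlib

section
/- Let r ≥ 4 and let T = {L_1,...,L_r} be an r-set of non-intersecting type with |L_i| = k+1 for all i. Then Σ_{2 ≤ l < t ≤ r} a_{l,t} = (r-2)(k+1)/2, where a_{l,t} = |L_l ∩ L_t|. -/
/-!
Since no point lies in three of the sets and every point of `L i` lies in some other `L j`,
each `L i` is the disjoint union of the `L i ∩ L j`, `j ≠ i`; hence every row sum
`∑_{j ≠ i} a_{i,j}` equals `k + 1`. Summing the rows `i ≠ 1` counts each `a_{l,t}` with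
`l, t ≠ 1` twice and the column `a_{i,1}` once, and the latter sums to `k + 1` as the row of `1`:
so `(r - 1)(k + 1) = 2 ∑_{2 ≤ l < t} a_{l,t} + (k + 1)`.
-/

namespace Finset

variable {ι α M : Type*}

theorem sum_card_inter_eq_card_of_subset_biUnion [DecidableEq α] {s : Finset ι}
    {L : ι → Finset α} {A : Finset α} (hcover : A ⊆ s.biUnion L)
    (htriple : ∀ j ∈ s, ∀ l ∈ s, j ≠ l → A ∩ L j ∩ L l = ∅) :
    ∑ j ∈ s, #(A ∩ L j) = #A := by
  have hdisj : (s : Set ι).PairwiseDisjoint (fun j => A ∩ L j) := by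
    intro j hj l hl hjl
    rw [Function.onFun, disjoint_iff_inter_eq_empty, ← htriple j hj l hl hjl]
    ext x; simp only [mem_inter]; tauto
  rw [← card_biUnion hdisj, ← inter_biUnion, inter_eq_left.mpr hcover]

theorem sum_offDiag_eq_two_nsmul_sum_lt [LinearOrder ι] [AddCommMonoid M] (s : Finset ι)
    {f : ι → ι → M} (hf : ∀ i j, f i j = f j i) :
    ∑ p ∈ s.offDiag, f p.1 p.2 = 2 • ∑ p ∈ s.offDiag with p.1 < p.2, f p.1 p.2 := by
  have hswap : ∑ p ∈ s.offDiag with ¬p.1 < p.2, f p.1 p.2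
      = ∑ p ∈ s.offDiag with p.1 < p.2, f p.1 p.2 := by
    refine sum_nbij' Prod.swap Prod.swap ?_ ?_ (by simp) (by simp) (fun p _ => hf _ _) <;>
    · intro p; simp only [mem_filter, mem_offDiag, Prod.fst_swap, Prod.snd_swap]; grind
  rw [← sum_filter_add_sum_filter_not s.offDiag (fun p => p.1 < p.2), hswap, two_nsmul]

theorem sum_offDiag_eq_sum_sum_erase [DecidableEq ι] [AddCommMonoid M] (s : Finset ι)
    (f : ι → ι → M) :
    ∑ p ∈ s.offDiag, f p.1 p.2 = ∑ i ∈ s, ∑ j ∈ s.erase i, f i j :=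
  sum_finset_product' _ _ _ fun p => by rw [mem_offDiag, mem_erase]; tauto

end Finset

open Finset

/-- for an `r`-set of non-intersecting type,
`Σ_{2 ≤ l < t ≤ r} a_{l,t} = (r-2)(k+1)/2` (stated multiplied by 2 to avoid
division; index `1` of the paper is the index `⟨0,_⟩` of `Fin r`). -/
theorem stmt_1 (n r k : ℕ) (hr : 4 ≤ r)
    (L : Fin r → Finset (Fin n))
    (hcard : ∀ i, (L i).card = k + 1)
    (htriple : ∀ i j l, i ≠ j → j ≠ l → i ≠ l → L i ∩ L j ∩ L l = ∅)
    (hunion : ∀ i : Fin r,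
      Finset.univ.biUnion L = (Finset.univ.erase i).biUnion L) :
    2 * ∑ p ∈ Finset.univ.filter
        (fun p : Fin r × Fin r =>
          p.1 ≠ (⟨0, by omega⟩ : Fin r) ∧ p.2 ≠ (⟨0, by omega⟩ : Fin r) ∧ p.1 < p.2),
        (L p.1 ∩ L p.2).card = (r - 2) * (k + 1) := by
  set z : Fin r := ⟨0, by omega⟩
  set A := univ.erase z
  have hrow (i : Fin r) : ∑ j ∈ univ.erase i, #(L i ∩ L j) = k + 1 := by
    refine (sum_card_inter_eq_card_of_subset_biUnion ?_ ?_).trans (hcard i)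
    · exact hunion i ▸ subset_biUnion_of_mem L (mem_univ i)
    · intro j hj l hl hjl
      exact htriple i j l (ne_of_mem_erase hj).symm hjl (ne_of_mem_erase hl).symm
  have hpairs : univ.filter (fun p : Fin r × Fin r => p.1 ≠ z ∧ p.2 ≠ z ∧ p.1 < p.2)
      = A.offDiag.filter (fun p => p.1 < p.2) := by
    ext p
    simp only [A, mem_filter, mem_offDiag, mem_erase, mem_univ, true_and, and_true]
    grind
  have hsplit (i : Fin r) (hi : i ∈ A) : ∑ j ∈ univ.erase i, #(L i ∩ L j)
      = ∑ j ∈ A.erase i, #(L i ∩ L j) + #(L z ∩ L i) := by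
    rw [inter_comm (L z), show A.erase i = (univ.erase i).erase z from erase_right_comm,
      sum_erase_add _ _ (mem_erase.mpr ⟨(ne_of_mem_erase hi).symm, mem_univ z⟩)]
  have htotal : (r - 1) * (k + 1) = 2 * ∑ p ∈ A.offDiag with p.1 < p.2, #(L p.1 ∩ L p.2)
      + (k + 1) := by
    calc (r - 1) * (k + 1) = ∑ i ∈ A, ∑ j ∈ univ.erase i, #(L i ∩ L j) := by
          simp [hrow, A, card_erase_of_mem]
      _ = ∑ p ∈ A.offDiag, #(L p.1 ∩ L p.2) + ∑ i ∈ A, #(L z ∩ L i) := by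
          rw [sum_congr rfl hsplit, sum_add_distrib,
            sum_offDiag_eq_sum_sum_erase A fun i j => #(L i ∩ L j)]
      _ = _ := by
          rw [sum_offDiag_eq_two_nsmul_sum_lt A (f := fun i j => #(L i ∩ L j))
            fun i j => by rw [inter_comm], smul_eq_mul, hrow z]
  rw [hpairs]
  rw [show r - 1 = r - 2 + 1 by omega, add_one_mul] at htotal
  omega
end

section
/- Let r ≥ 4 and let T = {L_1,...,L_r} be an r-set of non-intersecting type with |L_i| = k+1. Then the total number of indices appearing, |⋃_{i=1}^r L_i|, equals r(k+1)/2. -/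
/-- for an `r`-set of non-intersecting type, the total number of
indices appearing satisfies `|⋃ L_i| = r(k+1)/2` (stated multiplied by 2). -/
theorem stmt_2 (n r k : ℕ) (hr : 4 ≤ r)
    (L : Fin r → Finset (Fin n))
    (hcard : ∀ i, (L i).card = k + 1)
    (hpair : ∀ i j, i ≠ j → (L i ∩ L j).Nonempty)
    (htriple : ∀ i j l, i ≠ j → j ≠ l → i ≠ l → L i ∩ L j ∩ L l = ∅)
    (hunion : ∀ i : Fin r,
      Finset.univ.biUnion L = (Finset.univ.erase i).biUnion L) :
    2 * (Finset.univ.biUnion L).card = r * (k + 1) := by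
  classical
  set U := Finset.univ.biUnion L with hU
  have key : ∀ x ∈ U, (Finset.univ.filter (fun i => x ∈ L i)).card = 2 := by
    intro x hx
    refine le_antisymm ?_ ?_
    · by_contra h
      push_neg at h
      obtain ⟨a, ha, b, hb, c, hc, hab, hac, hbc⟩ := Finset.two_lt_card.mp h
      simp only [Finset.mem_filter] at ha hb hc
      have : x ∈ L a ∩ L b ∩ L c := by
        simp [ha.2, hb.2, hc.2]
      rw [htriple a b c hab hbc hac] at this
      exact absurd this (Finset.notMem_empty x)
    · obtain ⟨i, _, hxi⟩ := Finset.mem_biUnion.mp hx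
      have hx2 : x ∈ (Finset.univ.erase i).biUnion L := by
        rw [← hunion i]; exact hx
      obtain ⟨j, hj, hxj⟩ := Finset.mem_biUnion.mp hx2
      have hji : j ≠ i := (Finset.mem_erase.mp hj).1
      exact Finset.one_lt_card.mpr ⟨j, by simp [hxj], i, by simp [hxi], hji⟩
  have hsum : ∑ i : Fin r, (L i).card = ∑ x ∈ U, (Finset.univ.filter (fun i => x ∈ L i)).card := by
    have hLi : ∀ i, (L i).card = ∑ x ∈ U, (if x ∈ L i then 1 else 0) := by
      intro i
      rw [← Finset.card_filter]
      congr 1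
      ext x
      simp only [Finset.mem_filter, hU, Finset.mem_biUnion]
      exact ⟨fun h => ⟨⟨i, Finset.mem_univ i, h⟩, h⟩, fun h => h.2⟩
    simp only [hLi]
    rw [Finset.sum_comm]
    exact Finset.sum_congr rfl fun x _ => (Finset.card_filter _ _).symm
  have : ∑ i : Fin r, (L i).card = 2 * U.card := by
    rw [hsum, Finset.sum_congr rfl key]
    simp [mul_comm]
  have h2 : ∑ i : Fin r, (L i).card = r * (k + 1) := by
    simp [hcard]
  omega
end
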